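/- In a commutative idempotent involutive residuated lattice, for every element x, the interval B_x := {y | 0_x ⊑ y ⊑ 1_x} with operations · (as meet), ∨ (as join), ¬ (as complement), bottom 0_x and top 1_x forms a Boolean algebra. -/

import Mathlib

/-!
On `B_x` the monoidal order agrees with the lattice order: for `a, b ∈ B_x` we have
`a · ¬a = 0_x`, hence `¬a · (a · b) = 0_x · b = 0_x ≤ 0` and so `a · b ≤ a`. This gives the
absorption laws for `·` and `∨`, so `(B_x, ·, ∨)` is a lattice, distributive because `·` distributes
over `∨` by residuation. Complements come from `a · ¬a = 0_x` and its De Morgan dual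
`a ∨ ¬a = 1_x`.
-/

/-- A commutative idempotent involutive residuated lattice. -/
class CIdInRL (α : Type*) extends Lattice α, CommMonoid α, Zero α where
  arrow : α → α → α
  residuation : ∀ x y z : α, x * y ≤ z ↔ y ≤ arrow x z
  idem : ∀ x : α, x * x = x
  involutive : ∀ x : α, arrow (arrow x 0) 0 = x

namespace CIdInRL
variable {α : Type*} [CIdInRL α]
/-- linear negation ¬x := x → 0 -/
def neg (x : α) : α := arrow x 0
/-- 0_x := x ∧ ¬x -/
def zx (x : α) : α := x ⊓ neg x
/-- 1_x := x ∨ ¬x -/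
def ox (x : α) : α := x ⊔ neg x
/-- monoidal order x ⊑ y iff x·y = x -/
def mleq (x y : α) : Prop := x * y = x
end CIdInRL

namespace CIdInRL

variable {α : Type*} [CIdInRL α] {a b c : α}

theorem mul_le_iff_le_arrow : a * b ≤ c ↔ b ≤ arrow a c := residuation a b c

instance : MulLeftMono α :=
  ⟨fun _ _ _ h => mul_le_iff_le_arrow.2 (h.trans (mul_le_iff_le_arrow.1 le_rfl))⟩

theorem mul_sup (a b c : α) : a * (b ⊔ c) = a * b ⊔ a * c :=
  le_antisymm
    (mul_le_iff_le_arrow.2 <|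
      sup_le (mul_le_iff_le_arrow.1 le_sup_left) (mul_le_iff_le_arrow.1 le_sup_right))
    (sup_le (mul_le_mul_right le_sup_left a) (mul_le_mul_right le_sup_right a))

theorem inf_le_mul (a b : α) : a ⊓ b ≤ a * b :=
  calc a ⊓ b = (a ⊓ b) * (a ⊓ b) := (idem _).symm
    _ ≤ a * b := mul_le_mul' inf_le_left inf_le_right

theorem neg_neg (a : α) : neg (neg a) = a := involutive a

theorem le_neg_iff : a ≤ neg b ↔ b * a ≤ 0 := mul_le_iff_le_arrow.symm

theorem le_iff_neg_mul_le_zero : b ≤ a ↔ neg a * b ≤ 0 := by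
  rw [← le_neg_iff, neg_neg]

theorem le_neg_comm : a ≤ neg b ↔ b ≤ neg a := by
  rw [le_neg_iff, le_neg_iff, mul_comm]

theorem mul_neg_le_zero (a : α) : a * neg a ≤ 0 := le_neg_iff.1 le_rfl

theorem neg_le_neg (h : a ≤ b) : neg b ≤ neg a :=
  le_neg_comm.1 (by rwa [neg_neg])

theorem neg_sup (a b : α) : neg (a ⊔ b) = neg a ⊓ neg b :=
  eq_of_forall_le_iff fun c => by
    rw [le_inf_iff, le_neg_comm, sup_le_iff, le_neg_comm, le_neg_comm (b := b)]

theorem neg_inf (a b : α) : neg (a ⊓ b) = neg a ⊔ neg b := by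
  rw [← neg_neg (neg a ⊔ neg b), neg_sup, neg_neg, neg_neg]

theorem mul_neg_eq_inf (a : α) : a * neg a = a ⊓ neg a := by
  refine le_antisymm (le_inf ?_ ?_) (inf_le_mul a (neg a))
  · rw [le_iff_neg_mul_le_zero, mul_left_comm, idem]
    exact mul_neg_le_zero a
  · rw [le_neg_iff, ← mul_assoc, idem]
    exact mul_neg_le_zero a

theorem neg_zx (x : α) : neg (zx x) = ox x := by
  rw [zx, ox, neg_inf, neg_neg, sup_comm]

theorem neg_ox (x : α) : neg (ox x) = zx x := by
  rw [← neg_zx, neg_neg]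

theorem zx_le_zero (x : α) : zx x ≤ 0 :=
  (inf_le_mul x (neg x)).trans (mul_neg_le_zero x)

theorem one_le_ox (x : α) : 1 ≤ ox x := by
  rw [← neg_zx, le_neg_iff, mul_one]
  exact zx_le_zero x

theorem zx_mul_ox (x : α) : zx x * ox x = zx x := by
  rw [ox, mul_sup, zx, ← mul_neg_eq_inf, mul_right_comm, idem, mul_assoc, idem, sup_idem]

-- A `def` rather than an `abbrev`, so that `Subtype.preorder` does not compete with the order
-- of the lattice structure below.
def Bx (x : α) : Type _ := {y : α // mleq (zx x) y ∧ mleq y (ox x)}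

section Interval

variable {x : α}

theorem le_ox_of_zx_mleq (ha : mleq (zx x) a) : a ≤ ox x := by
  rw [← neg_zx, le_neg_iff, ha]
  exact zx_le_zero x

theorem zx_le_of_mem (ha : mleq (zx x) a ∧ mleq a (ox x)) : zx x ≤ a := by
  have h : zx x * a ≤ ox x * a := mul_le_mul_left (inf_le_left.trans le_sup_left) a
  rwa [ha.1, mul_comm, ha.2] at h

theorem mul_neg_self_of_mem (ha : mleq (zx x) a ∧ mleq a (ox x)) : a * neg a = zx x := by
  refine le_antisymm ?_ ((mul_neg_eq_inf a).symm ▸ le_inf (zx_le_of_mem ha) ?_)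
  · rw [← neg_ox, le_neg_iff, ← mul_assoc, mul_comm (ox x), ha.2]
    exact mul_neg_le_zero a
  · rw [← neg_ox]
    exact neg_le_neg (le_ox_of_zx_mleq ha.1)

theorem sup_neg_self_of_mem (ha : mleq (zx x) a ∧ mleq a (ox x)) : a ⊔ neg a = ox x := by
  rw [← neg_zx, ← mul_neg_self_of_mem ha, mul_neg_eq_inf, neg_inf, neg_neg, sup_comm]

theorem mul_le_left_of_mem (ha : mleq (zx x) a ∧ mleq a (ox x)) (hb : mleq (zx x) b) :
    a * b ≤ a := by
  rw [le_iff_neg_mul_le_zero, ← mul_assoc, mul_comm (neg a), mul_neg_self_of_mem ha, hb]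
  exact zx_le_zero x

theorem mul_mem (ha : mleq (zx x) a ∧ mleq a (ox x)) (hb : mleq (zx x) b ∧ mleq b (ox x)) :
    mleq (zx x) (a * b) ∧ mleq (a * b) (ox x) :=
  ⟨by rw [mleq, ← mul_assoc, ha.1, hb.1], by rw [mleq, mul_assoc, hb.2]⟩

theorem sup_mem (ha : mleq (zx x) a ∧ mleq a (ox x)) (hb : mleq (zx x) b ∧ mleq b (ox x)) :
    mleq (zx x) (a ⊔ b) ∧ mleq (a ⊔ b) (ox x) :=
  ⟨by rw [mleq, mul_sup, ha.1, hb.1, sup_idem],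
    by rw [mleq, mul_comm, mul_sup, mul_comm _ a, mul_comm _ b, ha.2, hb.2]⟩

theorem neg_mem (ha : mleq (zx x) a ∧ mleq a (ox x)) :
    mleq (zx x) (neg a) ∧ mleq (neg a) (ox x) := by
  have hzx : zx x ≤ neg a := neg_ox x ▸ neg_le_neg (le_ox_of_zx_mleq ha.1)
  have hox : neg a ≤ ox x := neg_zx x ▸ neg_le_neg (zx_le_of_mem ha)
  refine ⟨le_antisymm ?_ ?_, le_antisymm ?_ ?_⟩
  · exact (mul_le_mul_right hox _).trans (zx_mul_ox x).le
  · exact (idem (zx x)).symm.le.trans (mul_le_mul_right hzx _)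
  · rw [le_neg_iff, ← mul_assoc, mul_right_comm, ha.2]
    exact mul_neg_le_zero a
  · simpa using mul_le_mul_right (one_le_ox x) (neg a)

end Interval

namespace Bx

variable {x : α}

theorem ext {a b : Bx x} (h : a.1 = b.1) : a = b := Subtype.ext h

instance : Max (Bx x) := ⟨fun a b => ⟨a.1 ⊔ b.1, sup_mem a.2 b.2⟩⟩

instance : Min (Bx x) := ⟨fun a b => ⟨a.1 * b.1, mul_mem a.2 b.2⟩⟩

instance : Lattice (Bx x) :=
  Lattice.mk'
    (fun _ _ => ext (sup_comm _ _)) (fun _ _ _ => ext (sup_assoc _ _ _))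
    (fun _ _ => ext (mul_comm _ _)) (fun _ _ _ => ext (mul_assoc _ _ _))
    (fun a b => ext (sup_eq_left.2 (mul_le_left_of_mem a.2 b.2.1)))
    (fun a b => ext <| by
      show a.1 * (a.1 ⊔ b.1) = a.1
      rw [mul_sup, idem, sup_eq_left.2 (mul_le_left_of_mem a.2 b.2.1)])

instance : BooleanAlgebra (Bx x) where
  __ := DistribLattice.ofInfSupLe (α := Bx x) fun a b c => (ext (mul_sup a.1 b.1 c.1)).le
  compl a := ⟨neg a.1, neg_mem a.2⟩
  top := ⟨ox x, zx_mul_ox x, idem _⟩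
  bot := ⟨zx x, idem _, zx_mul_ox x⟩
  inf_compl_le_bot a := ext <| by
    show a.1 * neg a.1 ⊔ zx x = zx x
    rw [mul_neg_self_of_mem a.2, sup_idem]
  top_le_sup_compl a := ext <| by
    show ox x ⊔ (a.1 ⊔ neg a.1) = a.1 ⊔ neg a.1
    rw [sup_neg_self_of_mem a.2, sup_idem]
  le_top a := ext (sup_eq_right.2 (le_ox_of_zx_mleq a.2.1))
  bot_le a := ext (sup_eq_right.2 (zx_le_of_mem a.2))

end Bx

end CIdInRL

open CIdInRL in
theorem stmt6 {α : Type*} [CIdInRL α] (x : α) :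
    ∃ B : BooleanAlgebra {y : α // mleq (zx x) y ∧ mleq y (ox x)},
      (∀ a b : {y : α // mleq (zx x) y ∧ mleq y (ox x)}, (B.inf a b).1 = a.1 * b.1) ∧
      (∀ a b : {y : α // mleq (zx x) y ∧ mleq y (ox x)}, (B.sup a b).1 = a.1 ⊔ b.1) ∧
      (∀ a : {y : α // mleq (zx x) y ∧ mleq y (ox x)}, (B.compl a).1 = neg a.1) ∧
      (B.bot.1 = zx x) ∧ (B.top.1 = ox x) :=
  ⟨inferInstanceAs (BooleanAlgebra (Bx x)),
    fun _ _ => rfl, fun _ _ => rfl, fun _ => rfl, rfl, rfl⟩
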